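/- Let X be a Banach space on which the weak and norm topologies coincide on the unit sphere of X*, and suppose every x_i* in a sequence of unit vectors of X* is a w*-w point of continuity of X*_1. Let Ω be compact Hausdorff and suppose Λ = ∑_{i=1}^∞ α_i (δ_{ω_i} ⊗ x_i*) with α_i ∈ (0,1], ∑ α_i = 1, and each ω_i an isolated point of Ω. Then Λ is a w*-w point of continuity of C(Ω, X)*_1. -/

import Mathlib

/-!
Removing finitely many isolated points `ω_0, …, ω_{n-1}` splits `C(Ω, X)` as an `ℓ^∞`-sum of
`n` copies of `X` and the functions vanishing at these points, so the dual norm splits as an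
`ℓ¹`-sum: `‖ψ‖ = ∑_{i<n} ‖ψ ∘ e_i‖ + ‖ψ ∘ R_n‖`. Let `φ → Λ` weak* in the dual ball. Weak*
lower semicontinuity gives `liminf ‖φ ∘ e_i‖ ≥ α_i`, and as the `α_i` exhaust the budget `1`,
in fact `‖φ ∘ e_i‖ → α_i` and `‖φ ∘ R_n‖` is eventually at most the tail `∑_{i≥n} α_i` plus
`ε`. The normalised pieces `φ ∘ e_i / ‖φ ∘ e_i‖` are unit functionals converging weak* to
`x_i*`, hence weakly (w*-w point of continuity) and then in norm (weak = norm on the sphere).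
Hence `φ → Λ` in norm, a fortiori weakly.
-/

open NormedSpace Filter Topology

variable {Ω : Type*} [TopologicalSpace Ω] [CompactSpace Ω]
variable {X : Type*} [NormedAddCommGroup X] [NormedSpace ℝ X]

/-- The functional `δ_ω ⊗ x* : f ↦ x*(f ω)` on `C(Ω, X)`. -/
noncomputable def deltaTensor (ω : Ω) (x : StrongDual ℝ X) : StrongDual ℝ C(Ω, X) :=
  LinearMap.mkContinuous
    { toFun := fun f : C(Ω, X) => x (f ω)
      map_add' := fun f g => by simp
      map_smul' := fun c f => by simp }
    ‖x‖ (fun f => by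
      calc ‖x (f ω)‖ ≤ ‖x‖ * ‖f ω‖ := x.le_opNorm _
        _ ≤ ‖x‖ * ‖f‖ :=
          mul_le_mul_of_nonneg_left (f.norm_coe_le_norm ω) (norm_nonneg x))

/-- `x*` in the dual unit ball is a *w\*-w point of continuity*: every net (filter) in the
dual unit ball converging weak\* to `x*` converges weakly to `x*`. -/
def IsWStarWPC {E : Type*} [NormedAddCommGroup E] [NormedSpace ℝ E]
    (x : StrongDual ℝ E) : Prop :=
  ∀ l : Filter (StrongDual ℝ E), l.NeBot → (∀ᶠ φ in l, ‖φ‖ ≤ 1) →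
    (∀ v : E, Tendsto (fun φ : StrongDual ℝ E => φ v) l (𝓝 (x v))) →
    ∀ Λ : StrongDual ℝ (StrongDual ℝ E), Tendsto (fun φ : StrongDual ℝ E => Λ φ) l (𝓝 (Λ x))

section Dual

variable {E : Type*} [NormedAddCommGroup E] [NormedSpace ℝ E]

theorem exists_norm_le_one_lt_apply (ψ : StrongDual ℝ E) {c : ℝ} (hc : c < ‖ψ‖) :
    ∃ v : E, ‖v‖ ≤ 1 ∧ c < ψ v := by
  obtain ⟨w, hw, hcw⟩ := ψ.exists_lt_apply_of_lt_opNorm hc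
  rcases le_or_gt 0 (ψ w) with h | h
  · exact ⟨w, hw.le, by rwa [Real.norm_of_nonneg h] at hcw⟩
  · exact ⟨-w, by simpa using hw.le, by rwa [map_neg, ← Real.norm_of_nonpos h.le]⟩

theorem eventually_lt_norm_of_tendsto_apply {β : Type*} {l : Filter β} {φ : β → StrongDual ℝ E}
    {y : StrongDual ℝ E} (h : ∀ v, Tendsto (fun b => φ b v) l (𝓝 (y v))) {c : ℝ}
    (hc : c < ‖y‖) : ∀ᶠ b in l, c < ‖φ b‖ := by
  obtain ⟨v, hv, hcv⟩ := exists_norm_le_one_lt_apply y hc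
  filter_upwards [(h v).eventually (lt_mem_nhds hcv)] with b hb
  calc c < φ b v := hb
    _ ≤ ‖φ b v‖ := Real.le_norm_self _
    _ ≤ ‖φ b‖ * ‖v‖ := (φ b).le_opNorm v
    _ ≤ ‖φ b‖ := mul_le_of_le_one_right (norm_nonneg _) hv

/-- `y` is a point of weak-to-norm continuity of the unit sphere of the dual. -/
def IsWeakNormPCOnSphere (y : StrongDual ℝ E) : Prop :=
  ∀ l : Filter (StrongDual ℝ E), l.NeBot → (∀ᶠ φ in l, ‖φ‖ = 1) →
    (∀ Λ : StrongDual ℝ (StrongDual ℝ E), Tendsto (fun φ : StrongDual ℝ E => Λ φ) l (𝓝 (Λ y))) →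
    Tendsto (fun φ : StrongDual ℝ E => ‖φ - y‖) l (𝓝 0)

/-- Normalising `ψ` lands in the unit sphere, where weak* convergence to `y` upgrades first to
weak and then to norm convergence. -/
theorem IsWStarWPC.tendsto_of_tendsto_norm {y : StrongDual ℝ E} (hyw : IsWStarWPC y)
    (hyn : IsWeakNormPCOnSphere y) {β : Type*} {l : Filter β} [l.NeBot]
    {ψ : β → StrongDual ℝ E} {c : ℝ} (hc : 0 < c) (hnorm : Tendsto (fun b => ‖ψ b‖) l (𝓝 c))
    (hw : ∀ v, Tendsto (fun b => ψ b v) l (𝓝 ((c • y) v))) : Tendsto ψ l (𝓝 (c • y)) := by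
  set N : β → StrongDual ℝ E := fun b => ‖ψ b‖⁻¹ • ψ b
  have hne : ∀ᶠ b in l, ψ b ≠ 0 :=
    (hnorm.eventually (lt_mem_nhds hc)).mono fun b hb => norm_pos_iff.1 hb
  have hNnorm : ∀ᶠ φ in l.map N, ‖φ‖ = 1 :=
    eventually_map.2 <| hne.mono fun b hb => by simp [N, norm_smul, hb]
  have hNw : ∀ v, Tendsto (fun φ : StrongDual ℝ E => φ v) (l.map N) (𝓝 (y v)) := fun v => by
    have := (hnorm.inv₀ hc.ne').mul (hw v)
    rw [smul_apply, smul_eq_mul, inv_mul_cancel_left₀ hc.ne'] at this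
    exact tendsto_map'_iff.2 this
  have hNy : Tendsto N l (𝓝 y) := tendsto_iff_norm_sub_tendsto_zero.2 <| tendsto_map'_iff.1 <|
    hyn _ inferInstance hNnorm (hyw _ inferInstance (hNnorm.mono fun _ h => h.le) hNw)
  refine (hnorm.smul hNy).congr' (hne.mono fun b hb => ?_)
  simp [N, smul_smul, hb]

end Dual

section Budget

variable {β : Type*} {l : Filter β}

theorem eventually_sum_max_sub_add_lt {ι : Type*} {s : Finset ι} {f : ι → β → ℝ} {r : β → ℝ}
    {a : ι → ℝ} (hbudget : ∀ᶠ b in l, ∑ i ∈ s, f i b + r b ≤ 1)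
    (hlow : ∀ i ∈ s, ∀ c < a i, ∀ᶠ b in l, c < f i b) {ε : ℝ} (hε : 0 < ε) :
    ∀ᶠ b in l, ∑ i ∈ s, max (f i b - a i) 0 + r b < 1 - ∑ i ∈ s, a i + ε := by
  have hmin : Tendsto (fun b => ∑ i ∈ s, min (f i b) (a i)) l (𝓝 (∑ i ∈ s, a i)) :=
    tendsto_finsetSum s fun i hi => tendsto_order.2
      ⟨fun c hc => (hlow i hi c hc).mono fun b hb => lt_min hb hc,
        fun c hc => Eventually.of_forall fun b => (min_le_right _ _).trans_lt hc⟩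
  filter_upwards [hbudget, hmin.eventually (lt_mem_nhds (sub_lt_self _ hε))] with b hb hb'
  have hmax : ∀ i ∈ s, max (f i b - a i) 0 = f i b - min (f i b) (a i) := fun i _ => by
    rcases le_total (f i b) (a i) with h | h <;> simp [h]
  rw [Finset.sum_congr rfl hmax, Finset.sum_sub_distrib]
  linarith

/-- A piece exceeding its share `a i` by `ε`, while the pieces below `n` are almost at their
shares, overruns the budget once the tail `1 - ∑_{j<n} a j` is below `ε`. -/
theorem tendsto_of_eventually_sum_add_le_one {f : ℕ → β → ℝ} {r : ℕ → β → ℝ} {a : ℕ → ℝ}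
    (ha : HasSum a 1) (hr : ∀ n b, 0 ≤ r n b)
    (hbudget : ∀ n, ∀ᶠ b in l, ∑ i ∈ Finset.range n, f i b + r n b ≤ 1)
    (hlow : ∀ i, ∀ c < a i, ∀ᶠ b in l, c < f i b) (i : ℕ) : Tendsto (f i) l (𝓝 (a i)) := by
  refine tendsto_order.2 ⟨hlow i, fun c hc => ?_⟩
  have hε : 0 < (c - a i) / 2 := by linarith
  obtain ⟨n, hn, hin⟩ := ((ha.tendsto_sum_nat.eventually
    (lt_mem_nhds (sub_lt_self 1 hε))).and (eventually_gt_atTop i)).exists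
  filter_upwards [eventually_sum_max_sub_add_lt (hbudget n) (fun j _ => hlow j) hε] with b hb
  have hi : max (f i b - a i) 0 ≤ ∑ j ∈ Finset.range n, max (f j b - a j) 0 :=
    Finset.single_le_sum (f := fun j => max (f j b - a j) 0) (fun _ _ => le_max_right _ _)
      (Finset.mem_range.2 hin)
  linarith [le_max_left (f i b - a i) 0, hr n b]

end Budget

section DualSplitting

variable {E F : Type*} [NormedAddCommGroup E] [NormedSpace ℝ E] [NormedAddCommGroup F]
  [NormedSpace ℝ F] {e : ℕ → F →L[ℝ] E} {R : ℕ → E →L[ℝ] E}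

theorem tendsto_of_tendsto_comp {β : Type*} {l : Filter β} {φ : β → StrongDual ℝ E}
    {Λ : StrongDual ℝ E} {t : ℕ → ℝ}
    (hsplit : ∀ n (ψ : StrongDual ℝ E),
      ‖ψ‖ ≤ ∑ i ∈ Finset.range n, ‖ψ.comp (e i)‖ + ‖ψ.comp (R n)‖)
    (ht : Tendsto t atTop (𝓝 0)) (hΛR : ∀ n, ‖Λ.comp (R n)‖ ≤ t n)
    (he : ∀ i, Tendsto (fun b => (φ b).comp (e i)) l (𝓝 (Λ.comp (e i))))
    (hR : ∀ n, ∀ ε > 0, ∀ᶠ b in l, ‖(φ b).comp (R n)‖ < t n + ε) : Tendsto φ l (𝓝 Λ) := by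
  rw [tendsto_iff_norm_sub_tendsto_zero]
  refine tendsto_order.2
    ⟨fun c hc => Eventually.of_forall fun b => hc.trans_le (norm_nonneg _), fun ε hε => ?_⟩
  obtain ⟨n, hn⟩ := (ht.eventually (gt_mem_nhds (show 0 < ε / 4 by positivity))).exists
  have hsum : Tendsto (fun b => ∑ i ∈ Finset.range n, ‖(φ b).comp (e i) - Λ.comp (e i)‖) l
      (𝓝 0) := by
    simpa using tendsto_finsetSum (Finset.range n) fun i _ =>
      tendsto_iff_norm_sub_tendsto_zero.1 (he i)
  filter_upwards [hsum.eventually (gt_mem_nhds (show 0 < ε / 4 by positivity)),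
    hR n (ε / 4) (by positivity)] with b hbe hbR
  have := hsplit n (φ b - Λ)
  simp only [ContinuousLinearMap.sub_comp] at this
  linarith [hΛR n, norm_sub_le ((φ b).comp (R n)) (Λ.comp (R n))]

theorem isWStarWPC_of_norm_eq_sum_norm_comp
    (hsplit : ∀ n (ψ : StrongDual ℝ E),
      ‖ψ‖ = ∑ i ∈ Finset.range n, ‖ψ.comp (e i)‖ + ‖ψ.comp (R n)‖)
    {α : ℕ → ℝ} (hα : ∀ i, 0 < α i) (hαsum : HasSum α 1)
    {y : ℕ → StrongDual ℝ F} (hy : ∀ i, ‖y i‖ = 1) (hyw : ∀ i, IsWStarWPC (y i))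
    (hyn : ∀ i, IsWeakNormPCOnSphere (y i)) {Λ : StrongDual ℝ E}
    (hΛe : ∀ i, Λ.comp (e i) = α i • y i)
    (hΛR : ∀ n, ‖Λ.comp (R n)‖ ≤ 1 - ∑ i ∈ Finset.range n, α i) : IsWStarWPC Λ := by
  intro l hl hball hw Ψ
  have hwe : ∀ i v, Tendsto (fun φ : StrongDual ℝ E => φ.comp (e i) v) l (𝓝 ((α i • y i) v)) :=
    fun i v => hΛe i ▸ hw (e i v)
  have hlow : ∀ i, ∀ c < α i, ∀ᶠ φ in l, c < ‖φ.comp (e i)‖ := fun i c hc =>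
    eventually_lt_norm_of_tendsto_apply (hwe i) (by rwa [norm_smul, hy i, mul_one,
      Real.norm_of_nonneg (hα i).le])
  have hbudget : ∀ n, ∀ᶠ φ in l,
      ∑ i ∈ Finset.range n, ‖φ.comp (e i)‖ + ‖φ.comp (R n)‖ ≤ 1 := fun n =>
    hball.mono fun φ hφ => (hsplit n φ).ge.trans hφ
  have hnorm := tendsto_of_eventually_sum_add_le_one hαsum (fun _ _ => norm_nonneg _) hbudget hlow
  have hR : ∀ n, ∀ ε > 0, ∀ᶠ φ in l,
      ‖φ.comp (R n)‖ < 1 - ∑ i ∈ Finset.range n, α i + ε := fun n ε hε =>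
    (eventually_sum_max_sub_add_lt (hbudget n) (fun i _ => hlow i) hε).mono fun φ hφ => by
      linarith [Finset.sum_nonneg fun i (_ : i ∈ Finset.range n) =>
        le_max_right (‖φ.comp (e i)‖ - α i) 0]
  have hconv : Tendsto id l (𝓝 Λ) :=
    tendsto_of_tendsto_comp (fun n ψ => (hsplit n ψ).le)
      (by simpa using (tendsto_const_nhds (x := (1 : ℝ))).sub hαsum.tendsto_sum_nat) hΛR
      (fun i => hΛe i ▸ (hyw i).tendsto_of_tendsto_norm (hyn i) (hα i) (hnorm i) (hwe i)) hR
  exact (Ψ.continuous.tendsto Λ).comp hconv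

end DualSplitting

section ContinuousMap

variable (X)

noncomputable def indicatorCLM (U : Set Ω) (hU : IsClopen U) : C(Ω, X) →L[ℝ] C(Ω, X) :=
  LinearMap.mkContinuous
    { toFun := fun f => ⟨U.indicator f,
        continuous_indicator (by simp [hU.frontier_eq]) f.continuous.continuousOn⟩
      map_add' := fun f g => by ext q; by_cases hq : q ∈ U <;> simp [hq]
      map_smul' := fun c f => by ext q; by_cases hq : q ∈ U <;> simp [hq] }
    1 fun f => by
      rw [one_mul, ContinuousMap.norm_le _ (norm_nonneg f)]
      exact fun q => (norm_indicator_le_norm_self f q).trans (f.norm_coe_le_norm q)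

theorem indicatorCLM_apply (U : Set Ω) (hU : IsClopen U) (f : C(Ω, X)) (q : Ω) :
    indicatorCLM X U hU f q = U.indicator f q := rfl

noncomputable def singleCLM (p : Ω) (hp : IsClopen {p}) : X →L[ℝ] C(Ω, X) :=
  LinearMap.mkContinuous
    { toFun := fun v => ⟨({p} : Set Ω).indicator fun _ => v,
        continuous_indicator (by simp [hp.frontier_eq]) continuousOn_const⟩
      map_add' := fun v w => by ext q; by_cases hq : q = p <;> simp [hq]
      map_smul' := fun c v => by ext q; by_cases hq : q = p <;> simp [hq] }
    1 fun v => by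
      rw [one_mul, ContinuousMap.norm_le _ (norm_nonneg v)]
      exact fun q => norm_indicator_le_norm_self (fun _ => v) q

theorem singleCLM_apply (p : Ω) (hp : IsClopen {p}) (v : X) (q : Ω) :
    singleCLM X p hp v q = ({p} : Set Ω).indicator (fun _ => v) q := rfl

variable {ι : Type*} {ω : ι → Ω} (hclo : ∀ i, IsClopen ({ω i} : Set Ω))

noncomputable def indicatorComplCLM (s : Finset ι) : C(Ω, X) →L[ℝ] C(Ω, X) :=
  indicatorCLM X (⋃ i ∈ s, {ω i})ᶜ (isClopen_biUnion_finset fun i _ => hclo i).compl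

variable {X}

theorem sum_singleCLM_add_indicatorComplCLM_apply_of_mem (hω : Function.Injective ω)
    {s : Finset ι} (v : ι → X) (g : C(Ω, X)) {i : ι} (hi : i ∈ s) :
    (∑ j ∈ s, singleCLM X (ω j) (hclo j) (v j) + indicatorComplCLM X hclo s g) (ω i) = v i := by
  have hoff : ω i ∉ (⋃ j ∈ s, {ω j})ᶜ := fun h => h (Set.mem_biUnion hi rfl)
  rw [ContinuousMap.add_apply, ContinuousMap.coe_sum, Finset.sum_apply,
    Finset.sum_eq_single i (fun j _ hji => by simp [singleCLM_apply, hω.ne hji.symm])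
      (absurd hi), singleCLM_apply, indicatorComplCLM, indicatorCLM_apply,
    Set.indicator_of_mem (Set.mem_singleton _), Set.indicator_of_notMem hoff, add_zero]

theorem sum_singleCLM_add_indicatorComplCLM_apply_of_notMem {s : Finset ι} (v : ι → X)
    (g : C(Ω, X)) {q : Ω} (hq : q ∉ ⋃ i ∈ s, {ω i}) :
    (∑ j ∈ s, singleCLM X (ω j) (hclo j) (v j) + indicatorComplCLM X hclo s g) q = g q := by
  have hne : ∀ j ∈ s, q ≠ ω j := fun j hj h => hq (Set.mem_biUnion hj h)
  rw [ContinuousMap.add_apply, ContinuousMap.coe_sum, Finset.sum_apply,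
    Finset.sum_eq_zero fun j hj => by simp [singleCLM_apply, hne j hj], zero_add,
    indicatorComplCLM, indicatorCLM_apply, Set.indicator_of_mem hq]

theorem sum_singleCLM_add_indicatorComplCLM_self (hω : Function.Injective ω) (s : Finset ι)
    (f : C(Ω, X)) :
    ∑ j ∈ s, singleCLM X (ω j) (hclo j) (f (ω j)) + indicatorComplCLM X hclo s f = f := by
  ext q
  by_cases hq : q ∈ ⋃ i ∈ s, {ω i}
  · obtain ⟨i, hi, rfl⟩ := Set.mem_iUnion₂.1 hq
    exact sum_singleCLM_add_indicatorComplCLM_apply_of_mem hclo hω _ f hi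
  · exact sum_singleCLM_add_indicatorComplCLM_apply_of_notMem hclo _ f hq

theorem norm_sum_singleCLM_add_indicatorComplCLM_le_one (hω : Function.Injective ω)
    {s : Finset ι} {v : ι → X} (hv : ∀ i, ‖v i‖ ≤ 1) {g : C(Ω, X)} (hg : ‖g‖ ≤ 1) :
    ‖∑ j ∈ s, singleCLM X (ω j) (hclo j) (v j) + indicatorComplCLM X hclo s g‖ ≤ 1 := by
  refine (ContinuousMap.norm_le _ zero_le_one).2 fun q => ?_
  by_cases hq : q ∈ ⋃ i ∈ s, {ω i}
  · obtain ⟨i, hi, rfl⟩ := Set.mem_iUnion₂.1 hq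
    simpa [sum_singleCLM_add_indicatorComplCLM_apply_of_mem hclo hω v g hi] using hv i
  · rw [sum_singleCLM_add_indicatorComplCLM_apply_of_notMem hclo v g hq]
    exact (g.norm_coe_le_norm q).trans hg

theorem norm_le_sum_norm_comp_singleCLM_add (hω : Function.Injective ω) (s : Finset ι)
    (ψ : StrongDual ℝ C(Ω, X)) :
    ‖ψ‖ ≤ ∑ i ∈ s, ‖ψ.comp (singleCLM X (ω i) (hclo i))‖ +
      ‖ψ.comp (indicatorComplCLM X hclo s)‖ := by
  refine ψ.opNorm_le_bound (by positivity) fun f => ?_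
  conv_lhs => rw [← sum_singleCLM_add_indicatorComplCLM_self hclo hω s f]
  rw [map_add, map_sum, add_mul, Finset.sum_mul]
  refine (norm_add_le _ _).trans (add_le_add ((norm_sum_le _ _).trans
    (Finset.sum_le_sum fun i _ => ?_)) ((ψ.comp _).le_opNorm f))
  calc ‖ψ (singleCLM X (ω i) (hclo i) (f (ω i)))‖
      ≤ ‖ψ.comp (singleCLM X (ω i) (hclo i))‖ * ‖f (ω i)‖ := (ψ.comp _).le_opNorm _
    _ ≤ ‖ψ.comp (singleCLM X (ω i) (hclo i))‖ * ‖f‖ :=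
      mul_le_mul_of_nonneg_left (f.norm_coe_le_norm _) (norm_nonneg _)

/-- Each piece is almost normed by a vector of the unit ball; since the pieces live on disjoint
clopen sets, these vectors glue to a single function of the unit ball of `C(Ω, X)`. -/
theorem sum_norm_comp_singleCLM_add_le_norm (hω : Function.Injective ω) (s : Finset ι)
    (ψ : StrongDual ℝ C(Ω, X)) :
    ∑ i ∈ s, ‖ψ.comp (singleCLM X (ω i) (hclo i))‖ +
      ‖ψ.comp (indicatorComplCLM X hclo s)‖ ≤ ‖ψ‖ := by
  refine le_of_forall_pos_le_add fun ε hε => ?_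
  set δ := ε / (s.card + 1) with hδ
  have hδpos : 0 < δ := by positivity
  choose v hv hψv using fun i =>
    exists_norm_le_one_lt_apply (ψ.comp (singleCLM X (ω i) (hclo i))) (sub_lt_self _ hδpos)
  obtain ⟨g, hg, hψg⟩ :=
    exists_norm_le_one_lt_apply (ψ.comp (indicatorComplCLM X hclo s)) (sub_lt_self _ hδpos)
  simp only [ContinuousLinearMap.comp_apply] at hψv hψg
  have hglue := (Real.le_norm_self _).trans <| (ψ.le_opNorm _).trans <|
    mul_le_of_le_one_right (norm_nonneg ψ)
      (norm_sum_singleCLM_add_indicatorComplCLM_le_one hclo hω (s := s) hv hg)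
  rw [map_add, map_sum] at hglue
  have hsum : ∑ i ∈ s, ‖ψ.comp (singleCLM X (ω i) (hclo i))‖ ≤
      ∑ i ∈ s, ψ (singleCLM X (ω i) (hclo i) (v i)) + s.card * δ := by
    rw [← nsmul_eq_mul, ← Finset.sum_const, ← Finset.sum_add_distrib]
    exact Finset.sum_le_sum fun i _ => by linarith [hψv i]
  have hε : (s.card + 1) * δ = ε := by rw [hδ]; field_simp
  linarith

theorem norm_eq_sum_norm_comp_singleCLM_add (hω : Function.Injective ω) (s : Finset ι)
    (ψ : StrongDual ℝ C(Ω, X)) :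
    ‖ψ‖ = ∑ i ∈ s, ‖ψ.comp (singleCLM X (ω i) (hclo i))‖ +
      ‖ψ.comp (indicatorComplCLM X hclo s)‖ :=
  (norm_le_sum_norm_comp_singleCLM_add hclo hω s ψ).antisymm
    (sum_norm_comp_singleCLM_add_le_norm hclo hω s ψ)

end ContinuousMap

theorem deltaTensor_apply (p : Ω) (y : StrongDual ℝ X) (f : C(Ω, X)) :
    deltaTensor p y f = y (f p) := rfl

section Representation

variable {α : ℕ → ℝ} {x : ℕ → StrongDual ℝ X} {ω : ℕ → Ω}
  (hclo : ∀ i, IsClopen ({ω i} : Set Ω)) {Λ : StrongDual ℝ C(Ω, X)}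

theorem comp_singleCLM_eq_smul (hω : Function.Injective ω)
    (hrep : ∀ f : C(Ω, X), Λ f = ∑' i, α i * (deltaTensor (ω i) (x i)) f) (i : ℕ) :
    Λ.comp (singleCLM X (ω i) (hclo i)) = α i • x i := by
  ext v
  rw [ContinuousLinearMap.comp_apply, hrep, tsum_eq_single i fun j hj => ?_]
  · simp [deltaTensor_apply, singleCLM_apply]
  · simp [deltaTensor_apply, singleCLM_apply, hω.ne hj]

theorem norm_comp_indicatorComplCLM_range_le (hα : ∀ i, 0 ≤ α i) (hαsum : HasSum α 1)
    (hx : ∀ i, ‖x i‖ ≤ 1)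
    (hrep : ∀ f : C(Ω, X), Λ f = ∑' i, α i * (deltaTensor (ω i) (x i)) f) (n : ℕ) :
    ‖Λ.comp (indicatorComplCLM X hclo (Finset.range n))‖ ≤ 1 - ∑ i ∈ Finset.range n, α i := by
  have htail : HasSum (fun j => α (j + n)) (1 - ∑ i ∈ Finset.range n, α i) :=
    (hasSum_nat_add_iff' n).2 hαsum
  refine ContinuousLinearMap.opNorm_le_bound _ (htail.nonneg fun j => hα _) fun f => ?_
  have hbound : HasSum (fun j => if j < n then 0 else α j * ‖f‖)
      ((1 - ∑ i ∈ Finset.range n, α i) * ‖f‖) := by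
    rw [← hasSum_nat_add_iff' n,
      Finset.sum_eq_zero fun i hi => if_pos (Finset.mem_range.1 hi), sub_zero]
    simpa using htail.mul_right ‖f‖
  rw [ContinuousLinearMap.comp_apply, hrep]
  refine tsum_of_norm_bounded hbound fun j => ?_
  rw [deltaTensor_apply, indicatorComplCLM, indicatorCLM_apply]
  split_ifs with hj
  · have hmem : ω j ∉ (⋃ i ∈ Finset.range n, {ω i})ᶜ := fun h =>
      h (Set.mem_biUnion (Finset.mem_range.2 hj) rfl)
    rw [Set.indicator_of_notMem hmem, map_zero, mul_zero, norm_zero]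
  · rw [norm_mul, Real.norm_of_nonneg (hα j)]
    refine mul_le_mul_of_nonneg_left ?_ (hα j)
    calc ‖x j (Set.indicator _ f (ω j))‖ ≤ ‖x j‖ * ‖Set.indicator _ f (ω j)‖ := (x j).le_opNorm _
      _ ≤ 1 * ‖f (ω j)‖ := mul_le_mul (hx j) (norm_indicator_le_norm_self _ _) (norm_nonneg _)
          zero_le_one
      _ ≤ ‖f‖ := by rw [one_mul]; exact f.norm_coe_le_norm _

end Representation

theorem isWStarWPC_sum_of_weak_eq_norm_general [T2Space Ω]
    (hwn : ∀ y : StrongDual ℝ X, ‖y‖ = 1 →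
      ∀ l : Filter (StrongDual ℝ X), l.NeBot → (∀ᶠ φ in l, ‖φ‖ = 1) →
        (∀ Λ : StrongDual ℝ (StrongDual ℝ X), Tendsto (fun φ : StrongDual ℝ X => Λ φ) l (𝓝 (Λ y))) →
        Tendsto (fun φ : StrongDual ℝ X => ‖φ - y‖) l (𝓝 0))
    (Λ : StrongDual ℝ C(Ω, X))
    (α : ℕ → ℝ) (hα : ∀ i, α i ∈ Set.Ioc (0 : ℝ) 1) (hαsum : HasSum α 1)
    (ω : ℕ → Ω) (hω : Function.Injective ω)
    (hiso : ∀ i, IsOpen ({ω i} : Set Ω))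
    (x : ℕ → StrongDual ℝ X) (hx : ∀ i, ‖x i‖ = 1) (hxpc : ∀ i, IsWStarWPC (x i))
    (hrep : ∀ f : C(Ω, X), Λ f = ∑' i, α i * (deltaTensor (ω i) (x i)) f) :
    IsWStarWPC Λ := by
  have hclo : ∀ i, IsClopen ({ω i} : Set Ω) := fun i => ⟨isClosed_singleton, hiso i⟩
  exact isWStarWPC_of_norm_eq_sum_norm_comp
    (fun n => norm_eq_sum_norm_comp_singleCLM_add hclo hω (Finset.range n))
    (fun i => (hα i).1) hαsum hx hxpc (fun i => hwn (x i) (hx i))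
    (comp_singleCLM_eq_smul hclo hω hrep)
    (norm_comp_indicatorComplCLM_range_le hclo (fun i => (hα i).1.le) hαsum (fun i => (hx i).le)
      hrep)

/-- **Sufficiency of the structure condition when weak = norm on `S(X*)`.**  Suppose the
weak and norm topologies coincide on the unit sphere of `X*` (weakly convergent nets of
unit functionals converge in norm), each `x_i* ∈ S(X*)` is a w\*-w point of continuity of
`X*₁`, and `Λ = ∑ α_i (δ_{ω_i} ⊗ x_i*)` with `α_i ∈ (0, 1]`, `∑ α_i = 1` and each `ω_i`
an isolated point of `Ω`.  Then `Λ` is a w\*-w point of continuity of `C(Ω, X)*₁`. -/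
theorem isWStarWPC_sum_of_weak_eq_norm [T2Space Ω] [CompleteSpace X]
    (hwn : ∀ y : StrongDual ℝ X, ‖y‖ = 1 →
      ∀ l : Filter (StrongDual ℝ X), l.NeBot → (∀ᶠ φ in l, ‖φ‖ = 1) →
        (∀ Λ : StrongDual ℝ (StrongDual ℝ X), Tendsto (fun φ : StrongDual ℝ X => Λ φ) l (𝓝 (Λ y))) →
        Tendsto (fun φ : StrongDual ℝ X => ‖φ - y‖) l (𝓝 0))
    (Λ : StrongDual ℝ C(Ω, X)) (hΛball : ‖Λ‖ ≤ 1)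
    (α : ℕ → ℝ) (hα : ∀ i, α i ∈ Set.Ioc (0 : ℝ) 1) (hαsum : HasSum α 1)
    (ω : ℕ → Ω) (hω : Function.Injective ω)
    (hiso : ∀ i, IsOpen ({ω i} : Set Ω))
    (x : ℕ → StrongDual ℝ X) (hx : ∀ i, ‖x i‖ = 1) (hxpc : ∀ i, IsWStarWPC (x i))
    (hrep : ∀ f : C(Ω, X), Λ f = ∑' i, α i * (deltaTensor (ω i) (x i)) f) :
    IsWStarWPC Λ :=
  isWStarWPC_sum_of_weak_eq_norm_general hwn Λ α hα hαsum ω hω hiso x hx hxpc hrep
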